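/- Let G be a Garside group of finite type and x ∈ G with ℓ(x) > 1. Then: (1) if φ(x)ι(x) ⋠ Δ, then 𝔰(x) = d(c(x)); (2) if Δ ⋠ φ(x)ι(x), then 𝔰(x) = c(d(x)). -/

import Mathlib

/-!
Write `x = y φ` with `y = Δ^(sup x - 1) ∧ x` and `φ = φ(x)`; then `ι(x⁻¹) = φ⁻¹Δ`, so
`𝔭(x) = ι(x) ∧ φ⁻¹Δ`. If `φι ⋠ Δ`, cycling keeps `sup`, and left-invariance of `∧` turns
`Δ^(sup x - 1) ∧ c(x)` into `ι⁻¹ x 𝔭(x)`, so `φ(c(x)) = 𝔭(x)⁻¹ ι(x)`. If `Δ ⋠ φι`, decycling keeps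
`inf` and `ι(d(x)) = φ 𝔭(x)`. Either way the total conjugator is `𝔭(x)`. The condition
`ℓ(x) ≥ 2` makes `Δ ≼ Δ^(sup x - 1 - inf x)`, which removes the extra term from these meets.
-/

namespace GarsidePaper

/-- A Garside structure of finite type on a group `G`: a positive submonoid `P` with
`P ∩ P⁻¹ = {1}`, a Garside element `Δ ∈ P`, the prefix order `a ≼ b ↔ a⁻¹b ∈ P`
a lattice order (with meet `wedge` and join `vee`), the simple elements `[1,Δ]`
generating `G` and being finite, `Δ⁻¹PΔ = P`, a finite norm on positive elements,
and the infimum and supremum functions `inf`, `sup` characterised by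
`Δ^(inf x) ≼ x ≼ Δ^(sup x)` with `inf x` maximal and `sup x` minimal. -/
structure Garside (G : Type*) [Group G] where
  P : Submonoid G
  Δ : G
  purity : ∀ a : G, a ∈ P → a⁻¹ ∈ P → a = 1
  delta_mem : Δ ∈ P
  wedge : G → G → G
  vee : G → G → G
  wedge_le_left : ∀ a b : G, (wedge a b)⁻¹ * a ∈ P
  wedge_le_right : ∀ a b : G, (wedge a b)⁻¹ * b ∈ P
  le_wedge : ∀ a b c : G, c⁻¹ * a ∈ P → c⁻¹ * b ∈ P → c⁻¹ * wedge a b ∈ P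
  le_vee_left : ∀ a b : G, a⁻¹ * vee a b ∈ P
  le_vee_right : ∀ a b : G, b⁻¹ * vee a b ∈ P
  vee_le : ∀ a b c : G, a⁻¹ * c ∈ P → b⁻¹ * c ∈ P → (vee a b)⁻¹ * c ∈ P
  simples_generate : Subgroup.closure {a : G | a ∈ P ∧ a⁻¹ * Δ ∈ P} = (⊤ : Subgroup G)
  conj_pos : ∀ a : G, a ∈ P → Δ⁻¹ * a * Δ ∈ P
  norm : G → ℕ
  norm_exists : ∀ x : G, x ∈ P → x ≠ 1 →
    ∃ l : List G, (∀ s ∈ l, s ∈ P ∧ s ≠ 1) ∧ l.prod = x ∧ l.length = norm x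
  norm_max : ∀ x : G, x ∈ P → x ≠ 1 →
    ∀ l : List G, (∀ s ∈ l, s ∈ P ∧ s ≠ 1) → l.prod = x → l.length ≤ norm x
  simples_finite : Set.Finite {a : G | a ∈ P ∧ a⁻¹ * Δ ∈ P}
  inf : G → ℤ
  sup : G → ℤ
  inf_le : ∀ x : G, (Δ ^ inf x)⁻¹ * x ∈ P
  inf_max : ∀ (x : G) (p : ℤ), (Δ ^ p)⁻¹ * x ∈ P → p ≤ inf x
  le_sup : ∀ x : G, x⁻¹ * Δ ^ sup x ∈ P
  sup_min : ∀ (x : G) (q : ℤ), x⁻¹ * Δ ^ q ∈ P → sup x ≤ q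

namespace Garside

variable {G : Type*} [Group G]

/-- The prefix order `a ≼ b`. -/
def le (S : Garside G) (a b : G) : Prop := a⁻¹ * b ∈ S.P

/-- The canonical length `ℓ(x) = sup(x) - inf(x)`. -/
def len (S : Garside G) (x : G) : ℤ := S.sup x - S.inf x

/-- The initial factor `ι(x) = (x Δ^(-inf x)) ∧ Δ`. -/
def iota (S : Garside G) (x : G) : G := S.wedge (x * S.Δ ^ (-S.inf x)) S.Δ

/-- The preferred prefix `𝔭(x) = ι(x) ∧ ι(x⁻¹)`. -/
def pp (S : Garside G) (x : G) : G := S.wedge (S.iota x) (S.iota x⁻¹)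

/-- Cyclic sliding `𝔰(x) = 𝔭(x)⁻¹ x 𝔭(x)`. -/
def sl (S : Garside G) (x : G) : G := (S.pp x)⁻¹ * x * S.pp x

/-- The final factor `φ(x) = (Δ^(sup x - 1) ∧ x)⁻¹ x`. -/
def phi (S : Garside G) (x : G) : G := (S.wedge (S.Δ ^ (S.sup x - 1)) x)⁻¹ * x

/-- Conjugation by `Δ`: `τ(x) = Δ⁻¹ x Δ`. -/
def tau (S : Garside G) (x : G) : G := S.Δ⁻¹ * x * S.Δ

/-- Cycling `c(x) = ι(x)⁻¹ x ι(x)`. -/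
def cyc (S : Garside G) (x : G) : G := (S.iota x)⁻¹ * x * S.iota x

/-- Decycling `d(x) = φ(x) x φ(x)⁻¹`. -/
def dec (S : Garside G) (x : G) : G := S.phi x * x * (S.phi x)⁻¹

/-- The transport `α^{(1)} = 𝔭(x)⁻¹ α 𝔭(x^α)` of `α` at `x`. -/
def transport (S : Garside G) (x α : G) : G := (S.pp x)⁻¹ * α * S.pp (α⁻¹ * x * α)

/-- The iterated transport: `itTransport x i α = α^{(i)}`, the transport of `α^{(i-1)}`
at `𝔰^{i-1}(x)`, with `α^{(0)} = α`. -/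
def itTransport (S : Garside G) (x : G) : ℕ → G → G
  | 0, α => α
  | i + 1, α => S.transport ((S.sl)^[i] x) (S.itTransport x i α)

/-- `𝔓_i(x) = 𝔭(x) 𝔭(𝔰(x)) ⋯ 𝔭(𝔰^{i-1}(x))`, with `𝔓₀(x) = 1`. -/
def PP (S : Garside G) (x : G) : ℕ → G
  | 0 => 1
  | i + 1 => S.PP x i * S.pp ((S.sl)^[i] x)

/-- The summit set `SS(x)`. -/
def SS (S : Garside G) (x : G) : Set G :=
  {y | IsConj x y ∧ ∀ z : G, IsConj x z → S.inf z ≤ S.inf y}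

/-- The super summit set `SSS(x)`. -/
def SSS (S : Garside G) (x : G) : Set G :=
  {y | IsConj x y ∧ (∀ z : G, IsConj x z → S.inf z ≤ S.inf y) ∧
       (∀ z : G, IsConj x z → S.sup y ≤ S.sup z)}

/-- The ultra summit set `USS(x)`. -/
def USS (S : Garside G) (x : G) : Set G :=
  {y | y ∈ S.SSS x ∧ ∃ m : ℕ, 1 ≤ m ∧ (S.cyc)^[m] y = y}

/-- The reduced super summit set `RSSS(x)`. -/
def RSSS (S : Garside G) (x : G) : Set G :=
  {y | IsConj x y ∧ (∃ m : ℕ, 1 ≤ m ∧ (S.cyc)^[m] y = y) ∧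
       (∃ n : ℕ, 1 ≤ n ∧ (S.dec)^[n] y = y)}

/-- The set of sliding circuits `SC(x)`. -/
def SC (S : Garside G) (x : G) : Set G :=
  {y | IsConj x y ∧ ∃ m : ℕ, 1 ≤ m ∧ (S.sl)^[m] y = y}

end Garside

lemma commute_pow_of_pow_conj_eq {G : Type*} [Group G] {d a : G} {m j : ℕ}
    (h : (d ^ m)⁻¹ * a * d ^ m = (d ^ (m + j))⁻¹ * a * d ^ (m + j)) : Commute (d ^ j) a := by
  rw [add_comm, pow_add] at h
  have h' := congrArg (fun z => d ^ m * z * (d ^ m)⁻¹) h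
  simp only [mul_inv_rev, mul_assoc, mul_inv_cancel_left, mul_inv_cancel, mul_one] at h'
  exact eq_inv_mul_iff_mul_eq.mp h'

namespace Garside

variable {G : Type*} [Group G] (S : Garside G)

def simples : Set G := {a : G | a ∈ S.P ∧ a⁻¹ * S.Δ ∈ S.P}

lemma zpow_mem {k : ℤ} (hk : 0 ≤ k) : S.Δ ^ k ∈ S.P := by
  lift k to ℕ using hk
  exact_mod_cast S.P.pow_mem S.delta_mem k

lemma pow_conj_mem (n : ℕ) {a : G} (ha : a ∈ S.P) : (S.Δ ^ n)⁻¹ * a * S.Δ ^ n ∈ S.P := by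
  induction n with
  | zero => simpa using ha
  | succ n ih =>
    convert S.conj_pos _ ih using 1
    group

lemma pow_conj_mem_simples (n : ℕ) {a : G} (ha : a ∈ S.simples) :
    (S.Δ ^ n)⁻¹ * a * S.Δ ^ n ∈ S.simples := by
  refine ⟨S.pow_conj_mem n ha.1, ?_⟩
  convert S.pow_conj_mem n ha.2 using 1
  group

/-- Conjugation by `Δ` permutes the finitely many simple elements, so some power of it fixes
them all; since they generate `G`, that power of `Δ` is central. -/
lemma exists_pow_delta_commute : ∃ N : ℕ, 0 < N ∧ ∀ g : G, Commute (S.Δ ^ N) g := by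
  have : Finite S.simples := S.simples_finite.to_subtype
  obtain ⟨m, n, hmn, hconj⟩ := Finite.exists_ne_map_eq_of_infinite
    fun (n : ℕ) (a : S.simples) =>
      (⟨_, S.pow_conj_mem_simples n a.2⟩ : S.simples)
  wlog hlt : m < n generalizing m n
  · exact this n m hmn.symm hconj.symm (by omega)
  obtain ⟨j, rfl⟩ := Nat.exists_eq_add_of_lt hlt
  refine ⟨j + 1, j.succ_pos, fun g => ?_⟩
  have hsimple : S.simples ⊆ Subgroup.centralizer {S.Δ ^ (j + 1)} :=
    fun a ha => Subgroup.mem_centralizer_singleton_iff.mpr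
      (commute_pow_of_pow_conj_eq (congrArg Subtype.val (congrFun hconj ⟨a, ha⟩))).symm
  have hg : g ∈ Subgroup.centralizer {S.Δ ^ (j + 1)} :=
    (Subgroup.closure_le _).mpr hsimple (S.simples_generate ▸ Subgroup.mem_top g)
  exact (Subgroup.mem_centralizer_singleton_iff.mp hg).symm

lemma conj_inv_pos {a : G} (ha : a ∈ S.P) : S.Δ * a * S.Δ⁻¹ ∈ S.P := by
  obtain ⟨N, hN, hcomm⟩ := S.exists_pow_delta_commute
  obtain ⟨k, rfl⟩ := Nat.exists_eq_add_of_lt hN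
  convert S.pow_conj_mem k ha using 1
  have hk : S.Δ ^ k * S.Δ * a = a * (S.Δ ^ k * S.Δ) := by
    simpa only [zero_add, pow_succ] using (hcomm a).eq
  rw [show S.Δ * a * S.Δ⁻¹ = (S.Δ ^ k)⁻¹ * (S.Δ ^ k * S.Δ * a) * S.Δ⁻¹ by group, hk]
  group

lemma zpow_conj_mem (k : ℤ) {a : G} (ha : a ∈ S.P) : (S.Δ ^ k)⁻¹ * a * S.Δ ^ k ∈ S.P := by
  induction k using Int.induction_on with
  | zero => simpa using ha
  | succ n ih =>
    convert S.conj_pos _ ih using 1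
    rw [zpow_add_one]; group
  | pred n ih =>
    convert S.conj_inv_pos ih using 1
    rw [zpow_sub_one]; group

lemma le_refl (a : G) : S.le a a := by
  simp only [le, inv_mul_cancel, S.P.one_mem]

lemma le_trans {a b c : G} (hab : S.le a b) (hbc : S.le b c) : S.le a c := by
  simpa only [le, mul_assoc, mul_inv_cancel_left] using S.P.mul_mem hab hbc

lemma le_antisymm {a b : G} (hab : S.le a b) (hba : S.le b a) : a = b :=
  inv_mul_eq_one.mp <| S.purity _ hab (by simpa only [le, mul_inv_rev, inv_inv] using hba)

lemma le_mul_of_mem (a : G) {b : G} (hb : b ∈ S.P) : S.le a (a * b) := by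
  simpa only [le, inv_mul_cancel_left] using hb

lemma mul_le_mul_iff_left (c : G) {a b : G} : S.le (c * a) (c * b) ↔ S.le a b := by
  simp only [le, mul_inv_rev, mul_assoc, inv_mul_cancel_left]

lemma mul_zpow_le_mul_zpow_iff (k : ℤ) {a b : G} :
    S.le (a * S.Δ ^ k) (b * S.Δ ^ k) ↔ S.le a b := by
  unfold le
  refine ⟨fun h => ?_, fun h => ?_⟩
  · convert S.zpow_conj_mem (-k) h using 1
    rw [zpow_neg]; group
  · convert S.zpow_conj_mem k h using 1
    group

lemma le_wedge_iff {a b c : G} : S.le c (S.wedge a b) ↔ S.le c a ∧ S.le c b :=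
  ⟨fun h => ⟨S.le_trans h (S.wedge_le_left a b), S.le_trans h (S.wedge_le_right a b)⟩,
    fun h => S.le_wedge a b c h.1 h.2⟩

lemma eq_of_forall_le_iff {a b : G} (h : ∀ c, S.le c a ↔ S.le c b) : a = b :=
  S.le_antisymm ((h a).mp (S.le_refl a)) ((h b).mpr (S.le_refl b))

lemma mul_wedge (c a b : G) : S.wedge (c * a) (c * b) = c * S.wedge a b := by
  refine S.eq_of_forall_le_iff fun d => ?_
  obtain ⟨e, rfl⟩ : ∃ e, d = c * e := ⟨c⁻¹ * d, (mul_inv_cancel_left c d).symm⟩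
  simp only [le_wedge_iff, mul_le_mul_iff_left]

lemma wedge_mul_zpow (k : ℤ) (a b : G) :
    S.wedge (a * S.Δ ^ k) (b * S.Δ ^ k) = S.wedge a b * S.Δ ^ k := by
  refine S.eq_of_forall_le_iff fun d => ?_
  obtain ⟨e, rfl⟩ : ∃ e, d = e * S.Δ ^ k := ⟨d * (S.Δ ^ k)⁻¹, (inv_mul_cancel_right d _).symm⟩
  simp only [le_wedge_iff, mul_zpow_le_mul_zpow_iff]

lemma zpow_le_zpow {k l : ℤ} (hkl : k ≤ l) : S.le (S.Δ ^ k) (S.Δ ^ l) := by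
  simpa only [← zpow_add, add_sub_cancel] using
    S.le_mul_of_mem (S.Δ ^ k) (S.zpow_mem (sub_nonneg.mpr hkl))

lemma zpow_le_mul_zpow (k : ℤ) {a : G} (ha : a ∈ S.P) : S.le (S.Δ ^ k) (a * S.Δ ^ k) := by
  simpa only [le, mul_assoc] using S.zpow_conj_mem k ha

lemma sup_le_iff {x : G} {q : ℤ} : S.sup x ≤ q ↔ S.le x (S.Δ ^ q) :=
  ⟨fun h => S.le_trans (S.le_sup x) (S.zpow_le_zpow h), S.sup_min x q⟩

lemma le_inf_iff {x : G} {p : ℤ} : p ≤ S.inf x ↔ S.le (S.Δ ^ p) x :=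
  ⟨fun h => S.le_trans (S.zpow_le_zpow h) (S.inf_le x), S.inf_max x p⟩

lemma inf_inv (x : G) : S.inf x⁻¹ = -S.sup x := by
  refine _root_.le_antisymm ?_ (S.le_inf_iff.mpr ?_)
  · rw [le_neg, S.sup_le_iff, le]
    convert S.zpow_conj_mem (-S.inf x⁻¹) (S.inf_le x⁻¹) using 1
    group
  · unfold le
    convert S.zpow_conj_mem (-S.sup x) (S.le_sup x) using 1
    group

lemma delta_le_zpow {k : ℤ} (hk : 1 ≤ k) : S.le S.Δ (S.Δ ^ k) := by
  simpa only [zpow_one] using S.zpow_le_zpow hk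

lemma delta_le_mul_delta {a : G} (ha : a ∈ S.P) : S.le S.Δ (a * S.Δ) := by
  simpa only [zpow_one] using S.zpow_le_mul_zpow 1 ha

lemma zpow_le_mul {k : ℤ} {a b : G} (ha : a ∈ S.P) (hb : S.le (S.Δ ^ k) b) :
    S.le (S.Δ ^ k) (a * b) :=
  S.le_trans (S.zpow_le_mul_zpow k ha) ((S.mul_le_mul_iff_left a).mpr hb)

lemma iota_le_delta (x : G) : S.le (S.iota x) S.Δ := S.wedge_le_right _ _

lemma phi_mem (x : G) : S.phi x ∈ S.P := S.wedge_le_right _ _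

lemma mul_inv_phi (x : G) : x * (S.phi x)⁻¹ = S.wedge (S.Δ ^ (S.sup x - 1)) x := by
  rw [phi]; group

lemma wedge_zpow_sup_sub_one_mul_delta (x : G) :
    S.wedge (S.Δ ^ (S.sup x - 1)) x * S.Δ = S.wedge (S.Δ ^ S.sup x) (x * S.Δ) := by
  simpa only [zpow_one, ← zpow_add_one, sub_add_cancel] using
    (S.wedge_mul_zpow 1 (S.Δ ^ (S.sup x - 1)) x).symm

lemma iota_inv (x : G) : S.iota x⁻¹ = (S.phi x)⁻¹ * S.Δ := by
  calc S.iota x⁻¹ = S.wedge (x⁻¹ * S.Δ ^ S.sup x) (x⁻¹ * (x * S.Δ)) := by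
        rw [iota, inf_inv, neg_neg, inv_mul_cancel_left]
    _ = x⁻¹ * (S.wedge (S.Δ ^ (S.sup x - 1)) x * S.Δ) := by
        rw [mul_wedge, wedge_zpow_sup_sub_one_mul_delta]
    _ = (S.phi x)⁻¹ * S.Δ := by
        rw [← mul_inv_phi]; group

lemma iota_mul_zpow (x : G) (k : ℤ) :
    S.iota x * S.Δ ^ k = S.wedge (x * S.Δ ^ (k - S.inf x)) (S.Δ ^ (k + 1)) := by
  rw [iota, ← S.wedge_mul_zpow]
  congr 1 <;> group

lemma mul_iota_le_mul_delta (x : G) : S.le (x * S.iota x) (x * S.Δ) :=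
  (S.mul_le_mul_iff_left x).mpr (S.iota_le_delta x)

lemma mul_iota_le_mul_zpow (x : G) {k : ℤ} (hk : 1 ≤ k) :
    S.le (x * S.iota x) (x * S.Δ ^ k) :=
  S.le_trans (S.mul_iota_le_mul_delta x) ((S.mul_le_mul_iff_left x).mpr (S.delta_le_zpow hk))

lemma le_cyc_iff (x c : G) : S.le (S.cyc x) c ↔ S.le (x * S.iota x) (S.iota x * c) := by
  conv_rhs => rw [← S.mul_le_mul_iff_left (S.iota x)⁻¹, inv_mul_cancel_left]
  rw [cyc, mul_assoc]

lemma sup_cyc_le {x : G} (hx : 0 < S.len x) : S.sup (S.cyc x) ≤ S.sup x := by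
  unfold len at hx
  rw [sup_le_iff, le_cyc_iff, iota_mul_zpow, le_wedge_iff]
  refine ⟨S.mul_iota_le_mul_zpow x (by omega), S.le_trans (S.mul_iota_le_mul_delta x) ?_⟩
  simpa only [zpow_one, zpow_add_one] using (S.mul_zpow_le_mul_zpow_iff 1).mpr (S.le_sup x)

lemma sup_cyc_of_not_le {x : G} (hx : 0 < S.len x) (h : ¬ S.le (S.phi x * S.iota x) S.Δ) :
    S.sup (S.cyc x) = S.sup x := by
  refine _root_.le_antisymm (S.sup_cyc_le hx) (not_lt.mp fun hlt => h ?_)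
  have hcyc : S.le (x * S.iota x) (S.iota x * S.Δ ^ (S.sup x - 1)) :=
    (S.le_cyc_iff x _).mp (S.sup_le_iff.mp (by omega))
  rw [iota_mul_zpow, sub_add_cancel] at hcyc
  rw [← S.mul_le_mul_iff_left (S.wedge (S.Δ ^ (S.sup x - 1)) x), phi, ← mul_assoc,
    mul_inv_cancel_left, wedge_zpow_sup_sub_one_mul_delta, le_wedge_iff]
  exact ⟨S.le_trans hcyc (S.wedge_le_right _ _), S.mul_iota_le_mul_delta x⟩

lemma mul_pp (x : G) : x * S.pp x = S.wedge (x * S.iota x) (S.Δ ^ S.sup x) := by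
  rw [pp, iota_inv, ← mul_wedge, ← mul_assoc, mul_inv_phi, wedge_zpow_sup_sub_one_mul_delta]
  refine S.eq_of_forall_le_iff fun d => ?_
  simp only [le_wedge_iff]
  exact ⟨fun h => ⟨h.1, h.2.1⟩,
    fun h => ⟨h.1, h.2, S.le_trans h.1 (S.mul_iota_le_mul_delta x)⟩⟩

lemma wedge_zpow_cyc {x : G} (hx : 1 < S.len x) :
    S.wedge (S.Δ ^ (S.sup x - 1)) (S.cyc x) = (S.iota x)⁻¹ * (x * S.pp x) := by
  unfold len at hx
  rw [cyc, mul_assoc, ← inv_mul_cancel_left (S.iota x) (S.Δ ^ (S.sup x - 1)), mul_wedge, mul_pp,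
    iota_mul_zpow, sub_add_cancel]
  congr 1
  refine S.eq_of_forall_le_iff fun d => ?_
  simp only [le_wedge_iff]
  exact ⟨fun h => ⟨h.2, h.1.2⟩,
    fun h => ⟨⟨S.le_trans h.1 (S.mul_iota_le_mul_zpow x (by omega)), h.2⟩, h.1⟩⟩

lemma phi_cyc {x : G} (hx : 1 < S.len x) (h : ¬ S.le (S.phi x * S.iota x) S.Δ) :
    S.phi (S.cyc x) = (S.pp x)⁻¹ * S.iota x := by
  rw [phi, S.sup_cyc_of_not_le (zero_lt_one.trans hx) h, S.wedge_zpow_cyc hx, cyc]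
  group

theorem sl_eq_dec_cyc {x : G} (hx : 1 < S.len x) (h : ¬ S.le (S.phi x * S.iota x) S.Δ) :
    S.sl x = S.dec (S.cyc x) := by
  rw [sl, dec, S.phi_cyc hx h, cyc]
  group

lemma dec_eq_phi_mul (x : G) : S.dec x = S.phi x * S.wedge (S.Δ ^ (S.sup x - 1)) x := by
  rw [dec, mul_assoc, mul_inv_phi]

lemma inf_le_inf_dec {x : G} (hx : 0 < S.len x) : S.inf x ≤ S.inf (S.dec x) := by
  unfold len at hx
  rw [le_inf_iff, dec_eq_phi_mul]
  exact S.zpow_le_mul (S.phi_mem x)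
    (S.le_wedge _ _ _ (S.zpow_le_zpow (by omega)) (S.inf_le x))

lemma inf_dec_of_not_le {x : G} (hx : 0 < S.len x) (h : ¬ S.le S.Δ (S.phi x * S.iota x)) :
    S.inf (S.dec x) = S.inf x := by
  refine _root_.le_antisymm (not_lt.mp fun hlt => h ?_) (S.inf_le_inf_dec hx)
  have hdec : S.le (S.Δ ^ (S.inf x + 1)) (S.phi x * x) := by
    refine S.le_trans (S.le_inf_iff.mp (by omega : S.inf x + 1 ≤ S.inf (S.dec x))) ?_
    simpa only [dec, inv_mul_cancel_right] using S.le_mul_of_mem (S.dec x) (S.phi_mem x)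
  have hdelta := (S.mul_zpow_le_mul_zpow_iff (-S.inf x)).mpr hdec
  rw [← zpow_add, add_neg_cancel_comm, zpow_one, mul_assoc] at hdelta
  rw [iota, ← mul_wedge, le_wedge_iff]
  exact ⟨hdelta, S.delta_le_mul_delta (S.phi_mem x)⟩

lemma phi_mul_pp (x : G) :
    S.phi x * S.pp x = S.wedge (S.phi x * (x * S.Δ ^ (-S.inf x))) S.Δ := by
  rw [pp, iota_inv, ← mul_wedge, mul_inv_cancel_left, iota, ← mul_wedge]
  refine S.eq_of_forall_le_iff fun d => ?_
  simp only [le_wedge_iff]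
  exact ⟨fun h => ⟨h.1.1, h.2⟩,
    fun h => ⟨⟨h.1, S.le_trans h.2 (S.delta_le_mul_delta (S.phi_mem x))⟩, h.2⟩⟩

lemma iota_dec {x : G} (hx : 1 < S.len x) (h : ¬ S.le S.Δ (S.phi x * S.iota x)) :
    S.iota (S.dec x) = S.phi x * S.pp x := by
  have hdelta : S.le S.Δ (S.phi x * (S.Δ ^ (S.sup x - 1) * S.Δ ^ (-S.inf x))) := by
    rw [← zpow_add]
    exact S.le_trans (S.delta_le_zpow (by unfold len at hx; omega))
      (S.zpow_le_mul_zpow _ (S.phi_mem x))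
  rw [iota, S.inf_dec_of_not_le (zero_lt_one.trans hx) h, dec_eq_phi_mul, phi_mul_pp, mul_assoc,
    ← wedge_mul_zpow, ← mul_wedge]
  refine S.eq_of_forall_le_iff fun d => ?_
  simp only [le_wedge_iff]
  exact ⟨fun h => ⟨h.1.2, h.2⟩, fun h => ⟨⟨S.le_trans h.2 hdelta, h.1⟩, h.2⟩⟩

theorem sl_eq_cyc_dec {x : G} (hx : 1 < S.len x) (h : ¬ S.le S.Δ (S.phi x * S.iota x)) :
    S.sl x = S.cyc (S.dec x) := by
  rw [sl, cyc, S.iota_dec hx h, dec]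
  group

end Garside

open Garside in
theorem statement3 {G : Type*} [Group G] (S : Garside G) (x : G) (h : 1 < S.len x) :
    (¬ S.le (S.phi x * S.iota x) S.Δ → S.sl x = S.dec (S.cyc x)) ∧
    (¬ S.le S.Δ (S.phi x * S.iota x) → S.sl x = S.cyc (S.dec x)) :=
  ⟨S.sl_eq_dec_cyc h, S.sl_eq_cyc_dec h⟩

end GarsidePaper
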